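/- arXiv:0801.3178 — 2 statements merged into one kernel-verified Lean document; each statement's English description precedes it below -/
import Mathlib

section
/- Fix m ∈ ℕ, let n = m(m+1)/2, and define c_0,...,c_n by Π_{i=1}^m (1 - X^i) = Σ_i c_i X^i. For every non-empty subset S of {1,...,m} and every integer k > n, r(k,S) = - Σ_{j=k-n}^{k-1} c_{k-j} · r(j,S). -/
/-- `rCount k S` is the number of partitions of `k` whose set of parts is exactly `S`. -/
noncomputable def rCount (k : ℕ) (S : Finset ℕ) : ℕ :=
  Nat.card {P : Nat.Partition k // P.parts.toFinset = S}

/-!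
Put `G i = X ^ i / (1 - X ^ i)`. A partition of `k` with set of parts `S` amounts to a choice,
for each `i ∈ S`, of a positive multiple of `i` (the total size of the parts equal to `i`), these
multiples summing to `k`; hence `∑ₖ r(k,S) Xᵏ = ∏_{i ∈ S} G i`. Multiplying by
`Δ = ∏_{i ≤ m} (1 - Xⁱ)` clears every denominator and leaves the polynomial
`X ^ (∑ S) * ∏_{i ∈ [1,m] \ S} (1 - Xⁱ)` of degree at most `n = ∑_{i ≤ m} i`. As `Δ` has constant
term `1`, the vanishing of the coefficients of degree `k > n` of `Δ · ∑ₖ r(k,S) Xᵏ` is the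
recurrence.
-/

open Finset PowerSeries
open scoped Polynomial

namespace Nat.Partition

theorem toFinsuppAntidiag_sum {n : ℕ} (P : n.Partition) :
    P.toFinsuppAntidiag.sum (fun _ x => x) = n :=
  (Finset.mem_finsuppAntidiag'.mp P.toFinsuppAntidiag_mem_finsuppAntidiag).1

theorem exists_toFinsuppAntidiag_eq {n : ℕ} {g : ℕ →₀ ℕ} (hsum : g.sum (fun _ x => x) = n)
    (hdvd : ∀ i, i ∣ g i) : ∃ P : n.Partition, P.toFinsuppAntidiag = g := by
  classical
  let mult : ℕ →₀ ℕ := Finsupp.onFinset g.support (fun i => g i / i) fun i hi => by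
    simp only [Finsupp.mem_support_iff]
    intro h
    simp [h] at hi
  have hmult : ∀ i, g i / i * i = g i := fun i => Nat.div_mul_cancel (hdvd i)
  refine ⟨⟨Finsupp.toMultiset mult, fun {i} hi => ?_, ?_⟩, ?_⟩
  · rw [Finsupp.mem_toMultiset, Finsupp.mem_support_iff] at hi
    -- `0 ∣ g 0` forces `g 0 = 0`, so `0` is never a part
    refine Nat.pos_of_ne_zero fun h0 => hi ?_
    simp [mult, h0, zero_dvd_iff.mp (hdvd 0)]
  · rw [Finsupp.sum_toMultiset, Finsupp.onFinset_sum _ (fun a => zero_smul ℕ a), ← hsum]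
    exact Finset.sum_congr rfl fun i _ => hmult i
  · ext i
    simp [toFinsuppAntidiag, mult, hmult]

end Nat.Partition

theorem rCount_eq_card (k : ℕ) (S : Finset ℕ) :
    rCount k S = #{g ∈ S.finsuppAntidiag k | ∀ i ∈ S, g i ≠ 0 ∧ i ∣ g i} := by
  classical
  rw [rCount, Nat.card_eq_fintype_card, Fintype.card_subtype]
  refine card_bij (fun P _ => P.toFinsuppAntidiag) ?_
    (fun P _ Q _ h => Nat.Partition.toFinsuppAntidiag_injective k h) ?_
  · intro P hP
    simp only [mem_filter, mem_univ, true_and] at hP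
    have hsupp : P.toFinsuppAntidiag.support = S := hP
    refine mem_filter.mpr ⟨mem_finsuppAntidiag'.mpr ⟨P.toFinsuppAntidiag_sum, hsupp.le⟩,
      fun i hi => ⟨Finsupp.mem_support_iff.mp (hsupp ▸ hi), dvd_mul_left i _⟩⟩
  · intro g hg
    rw [mem_filter, mem_finsuppAntidiag'] at hg
    obtain ⟨⟨hsum, hsupp⟩, hS⟩ := hg
    have hdvd : ∀ i, i ∣ g i := fun i => by
      by_cases hi : i ∈ S
      · exact (hS i hi).2
      · rw [Finsupp.notMem_support_iff.mp fun h => hi (hsupp h)]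
        exact dvd_zero i
    obtain ⟨P, hP⟩ := Nat.Partition.exists_toFinsuppAntidiag_eq hsum hdvd
    refine ⟨P, mem_filter.mpr ⟨mem_univ _, ?_⟩, hP⟩
    change P.toFinsuppAntidiag.support = S
    rw [hP]
    exact hsupp.antisymm fun i hi => Finsupp.mem_support_iff.mpr (hS i hi).1

theorem Finset.sum_Icc_one_id (m : ℕ) : ∑ i ∈ Icc 1 m, i = m * (m + 1) / 2 := by
  have := sum_range_id (m + 1)
  rw [Nat.range_succ_eq_Icc_zero, ← sum_Ioc_add_eq_sum_Icc (Nat.zero_le _),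
    ← Icc_add_one_left_eq_Ioc] at this
  simpa [Nat.mul_comm] using this

section Polynomial

open Polynomial

variable {R : Type*} [CommRing R]

theorem Polynomial.natDegree_prod_one_sub_X_pow_le (s : Finset ℕ) :
    (∏ i ∈ s, (1 - X ^ i : R[X])).natDegree ≤ ∑ i ∈ s, i :=
  (natDegree_prod_le _ _).trans <| sum_le_sum fun i _ =>
    (natDegree_sub_le _ _).trans (by simp [natDegree_X_pow_le])

theorem Polynomial.coeff_zero_prod_one_sub_X_pow {s : Finset ℕ} (hs : 0 ∉ s) :
    (∏ i ∈ s, (1 - X ^ i : R[X])).coeff 0 = 1 := by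
  rw [coeff_zero_eq_eval_zero, eval_prod]
  exact prod_eq_one fun i hi => by simp [zero_pow (ne_of_mem_of_not_mem hi hs)]

theorem Polynomial.coe_prod_one_sub_X_pow (s : Finset ℕ) :
    ((∏ i ∈ s, (1 - X ^ i : R[X]) : R[X]) : R⟦X⟧) = ∏ i ∈ s, (1 - PowerSeries.X ^ i) := by
  rw [← coeToPowerSeries.ringHom_apply, map_prod]
  simp [coeToPowerSeries.ringHom_apply]

theorem PowerSeries.coeff_eq_neg_sum_of_coeff_mul_eq_zero {p : R[X]} {n k : ℕ}
    (hp0 : p.coeff 0 = 1) (hpn : p.natDegree ≤ n) {f : R⟦X⟧}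
    (hk : PowerSeries.coeff k ((p : R⟦X⟧) * f) = 0) :
    PowerSeries.coeff k f = - ∑ j ∈ Ico (k - n) k, p.coeff (k - j) * PowerSeries.coeff j f := by
  rw [mul_comm, PowerSeries.coeff_mul, Nat.sum_antidiagonal_eq_sum_range_succ_mk,
    sum_range_succ] at hk
  simp only [Polynomial.coeff_coe, Nat.sub_self, hp0, mul_one] at hk
  have htail : ∑ j ∈ Ico (k - n) k, p.coeff (k - j) * PowerSeries.coeff j f
      = ∑ j ∈ range k, PowerSeries.coeff j f * p.coeff (k - j) := by
    rw [range_eq_Ico]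
    refine sum_subset (Ico_subset_Ico_left (Nat.zero_le _)) (fun j hj hjn => ?_) |>.trans ?_
    · rw [mem_Ico] at hj hjn
      rw [coeff_eq_zero_of_natDegree_lt (by omega), zero_mul]
    · exact sum_congr rfl fun j _ => mul_comm _ _
  rw [htail]
  linear_combination hk

end Polynomial

section PowerSeries

variable (R : Type*) [CommRing R]

/-- `X ^ i / (1 - X ^ i)`, the generating function of the part `i` used at least once. -/
noncomputable def multiplesSeries (i : ℕ) : R⟦X⟧ :=
  mk fun n => if n ≠ 0 ∧ i ∣ n then 1 else 0

theorem multiplesSeries_mul_one_sub_X_pow {i : ℕ} (hi : i ≠ 0) :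
    multiplesSeries R i * (1 - X ^ i) = X ^ i := by
  ext n
  rw [mul_sub, mul_one, map_sub, coeff_mul_X_pow', coeff_X_pow, multiplesSeries, coeff_mk,
    coeff_mk]
  rcases lt_or_ge n i with h | h
  · have : ¬ (n ≠ 0 ∧ i ∣ n) := fun ⟨h0, hd⟩ => (Nat.le_of_dvd (by omega) hd).not_gt h
    simp [this, h.not_ge, h.ne]
  · obtain ⟨t, rfl⟩ := Nat.exists_eq_add_of_le h
    rcases eq_or_ne t 0 with rfl | ht
    · simp [hi]
    · simp [ht, hi, Nat.dvd_add_right dvd_rfl]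

theorem prod_multiplesSeries (S : Finset ℕ) :
    ∏ i ∈ S, multiplesSeries R i = mk fun k => (rCount k S : R) := by
  classical
  ext k
  simp only [coeff_prod, multiplesSeries, coeff_mk, prod_boole, sum_boole, rCount_eq_card]

variable {R}

theorem prod_one_sub_X_pow_mul_rCount {S T : Finset ℕ} (hST : S ⊆ T) (hS0 : 0 ∉ S) :
    (∏ i ∈ T, (1 - X ^ i)) * (mk fun k => (rCount k S : R))
      = (∏ i ∈ T \ S, (1 - X ^ i)) * X ^ (∑ i ∈ S, i) := by
  rw [← prod_multiplesSeries, ← prod_sdiff hST, mul_assoc, ← prod_mul_distrib,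
    ← prod_pow_eq_pow_sum]
  congr 1
  exact prod_congr rfl fun i hi =>
    (mul_comm _ _).trans (multiplesSeries_mul_one_sub_X_pow R (ne_of_mem_of_not_mem hi hS0))

theorem coeff_prod_one_sub_X_pow_mul_rCount_eq_zero {S T : Finset ℕ} (hST : S ⊆ T)
    (hS0 : 0 ∉ S) {k : ℕ} (hk : ∑ i ∈ T, i < k) :
    coeff k (((∏ i ∈ T, (1 - Polynomial.X ^ i) : R[X]) : R⟦X⟧) * mk fun j => (rCount j S : R))
      = 0 := by
  let q : R[X] := (∏ i ∈ T \ S, (1 - Polynomial.X ^ i)) * Polynomial.X ^ (∑ i ∈ S, i)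
  have hq : (q : R⟦X⟧) = (∏ i ∈ T \ S, (1 - X ^ i)) * X ^ (∑ i ∈ S, i) := by
    simp only [q, Polynomial.coe_mul, Polynomial.coe_prod_one_sub_X_pow, Polynomial.coe_pow,
      Polynomial.coe_X]
  have hdeg : q.natDegree ≤ ∑ i ∈ T, i :=
    calc q.natDegree ≤ (∑ i ∈ T \ S, i) + ∑ i ∈ S, i :=
          Polynomial.natDegree_mul_le.trans <| add_le_add
            (Polynomial.natDegree_prod_one_sub_X_pow_le _) (Polynomial.natDegree_X_pow_le _)
      _ = ∑ i ∈ T, i := sum_sdiff hST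
  rw [Polynomial.coe_prod_one_sub_X_pow, prod_one_sub_X_pow_mul_rCount hST hS0, ← hq,
    Polynomial.coeff_coe]
  exact Polynomial.coeff_eq_zero_of_natDegree_lt (hdeg.trans_lt hk)

end PowerSeries

theorem rCount_recurrence_general (m : ℕ) (S : Finset ℕ)
    (hSm : S ⊆ Finset.Icc 1 m) (k : ℕ) (hk : m * (m + 1) / 2 < k) :
    (rCount k S : ℤ) =
      - ∑ j ∈ Finset.Ico (k - m * (m + 1) / 2) k,
          (∏ i ∈ Finset.Icc 1 m, (1 - Polynomial.X ^ i : Polynomial ℤ)).coeff (k - j) *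
            (rCount j S : ℤ) := by
  have hS0 : 0 ∉ S := fun h => by simpa using hSm h
  have hvanish := coeff_prod_one_sub_X_pow_mul_rCount_eq_zero (R := ℤ) hSm hS0
    ((sum_Icc_one_id m).trans_lt hk)
  have hrec := coeff_eq_neg_sum_of_coeff_mul_eq_zero
    (Polynomial.coeff_zero_prod_one_sub_X_pow (by simp))
    ((Polynomial.natDegree_prod_one_sub_X_pow_le _).trans (sum_Icc_one_id m).le) hvanish
  simpa only [coeff_mk] using hrec

/-- Fix `m`, let `n = m(m+1)/2` and let `c_i` be the coefficients of
`∏_{i=1}^m (1 - Xⁱ)`. For every non-empty `S ⊆ {1,...,m}` and every `k > n`,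
`r(k,S) = - ∑_{j=k-n}^{k-1} c_{k-j} r(j,S)`. -/
theorem rCount_recurrence (m : ℕ) (S : Finset ℕ) (hS : S.Nonempty)
    (hSm : S ⊆ Finset.Icc 1 m) (k : ℕ) (hk : m * (m + 1) / 2 < k) :
    (rCount k S : ℤ) =
      - ∑ j ∈ Finset.Ico (k - m * (m + 1) / 2) k,
          (∏ i ∈ Finset.Icc 1 m, (1 - Polynomial.X ^ i : Polynomial ℤ)).coeff (k - j) *
            (rCount j S : ℤ) :=
  rCount_recurrence_general m S hSm k hk
end

section
/- For m a positive integer with n = m(m+1)/2, the infinite matrix P whose (k,S)-entry is p(k,S) (rows indexed by k ∈ ℤ_{≥0}, columns by non-empty subsets S of {1,...,m}) has rank exactly n over ℚ. -/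
/-!
Multiplying the generating function `∏_{j ∈ S} (1 - X^j)⁻¹` of the column indexed by `S` by the
power series unit `∏_{j=1}^m (1 - X^j)` turns it into the polynomial `∏_{j ∈ [m] \ S} (1 - X^j)`.
So the column space is isomorphic to the span of these polynomials. As `S` runs over the non-empty
subsets, `[m] \ S` runs over the proper subsets of `[m]`, whose element sums are exactly
`0, 1, …, n - 1` with `n = 1 + ⋯ + m`; the polynomials therefore have unit leading coefficients
and all degrees below `n`, and span the `n`-dimensional space of polynomials of degree `< n`.
Row rank equals column rank because there are finitely many columns.
-/

open Finset Module Submodule Polynomial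
open scoped PowerSeries

/-- `pCount k S` is the number of partitions of `k` all of whose parts lie in `S`. -/
noncomputable def pCount (k : ℕ) (S : Finset ℕ) : ℕ :=
  Nat.card {P : Nat.Partition k // ∀ i ∈ P.parts, i ∈ S}

theorem pCount_eq_card_restricted (k : ℕ) (S : Finset ℕ) :
    pCount k S = #(Nat.Partition.restricted k (· ∈ S)) := by
  rw [pCount, Nat.card_eq_fintype_card, Fintype.card_subtype, Nat.Partition.restricted]

theorem finrank_span_range_eq_finrank_span_range_swap {ι κ K : Type*} [Field K] [Finite κ]
    (A : ι → κ → K) :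
    finrank K (span K (Set.range A)) = finrank K (span K (Set.range (Function.swap A))) := by
  classical
  cases nonempty_fintype κ
  set W := (span K (Set.range A)).map (dotProductEquiv K κ).toLinearMap with hW_def
  have hW : W.dualCoannihilator = LinearMap.ker (Matrix.of A).mulVecLin := by
    ext x
    rw [← SetLike.mem_coe, hW_def, map_span, coe_dualCoannihilator_span]
    simp only [Set.forall_mem_image, Set.forall_mem_range, Set.mem_ofPred_eq,
      LinearMap.mem_ker, Matrix.mulVecLin_apply, funext_iff]
    rfl
  have h_row := Subspace.finrank_add_finrank_dualCoannihilator_eq W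
  have h_col := LinearMap.finrank_range_add_finrank_ker (Matrix.of A).mulVecLin
  rw [hW, LinearEquiv.finrank_map_eq] at h_row
  have h_rank := Matrix.rank_eq_finrank_span_cols (Matrix.of A)
  rw [Matrix.rank] at h_rank
  change _ = finrank K (span K (Set.range (Matrix.of A).col))
  omega

theorem finrank_span_range_comp_of_injective {ι K M N : Type*} [Ring K] [AddCommGroup M]
    [Module K M] [AddCommGroup N] [Module K N] {f : M →ₗ[K] N} (hf : Function.Injective f)
    (v : ι → M) : finrank K (span K (Set.range (f ∘ v))) = finrank K (span K (Set.range v)) := by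
  rw [Set.range_comp, ← map_span]
  exact (equivMapOfInjective f hf _).finrank_eq.symm

noncomputable def PowerSeries.mkₗ (R : Type*) [Semiring R] : (ℕ → R) →ₗ[R] R⟦X⟧ where
  toFun := PowerSeries.mk
  map_add' _ _ := by ext; simp
  map_smul' _ _ := by ext; simp

theorem PowerSeries.mkₗ_injective (R : Type*) [Semiring R] :
    Function.Injective (PowerSeries.mkₗ R) :=
  fun _ _ h => funext fun k => by simpa [PowerSeries.mkₗ] using congrArg (PowerSeries.coeff k) h

theorem Finset.sum_Icc_id_mul_two (m : ℕ) : (∑ j ∈ Icc 1 m, j) * 2 = m * (m + 1) := by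
  induction m with
  | zero => simp
  | succ m ih => rw [sum_Icc_succ_top (by omega), add_mul, ih]; ring

theorem Finset.exists_subset_Icc_sum_eq {m d : ℕ} (hd : d ≤ ∑ j ∈ Icc 1 m, j) :
    ∃ T ⊆ Icc 1 m, ∑ j ∈ T, j = d := by
  induction m generalizing d with
  | zero => exact ⟨∅, by simp, by simpa using (Nat.le_zero.1 hd).symm⟩
  | succ m ih =>
    rw [sum_Icc_succ_top (by omega)] at hd
    have hIcc : Icc 1 m ⊆ Icc 1 (m + 1) := Icc_subset_Icc_right (by omega)
    by_cases hle : d ≤ ∑ j ∈ Icc 1 m, j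
    · obtain ⟨T, hT, rfl⟩ := ih hle
      exact ⟨T, hT.trans hIcc, rfl⟩
    · have hm_le : m ≤ ∑ j ∈ Icc 1 m, j := by
        rcases m.eq_zero_or_pos with rfl | hm
        · simp
        · exact single_le_sum (f := id) (fun _ _ => Nat.zero_le _) (right_mem_Icc.2 hm)
      obtain ⟨T, hT, hsum⟩ := ih (d := d - (m + 1)) (by omega)
      have hmT : m + 1 ∉ T := fun h => by simpa using hT h
      refine ⟨insert (m + 1) T, insert_subset (by simp) (hT.trans hIcc), ?_⟩
      rw [sum_insert hmT, hsum]
      omega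

theorem Polynomial.span_eq_degreeLT_of_forall_natDegree {R : Type*} [Ring R] [Nontrivial R]
    {s : Set R[X]} {n : ℕ} (hs : ∀ p ∈ s, p.degree < n)
    (hd : ∀ d < n, ∃ p ∈ s, p.natDegree = d ∧ IsUnit p.leadingCoeff) :
    span R s = degreeLT R n := by
  choose p hps hpdeg hpunit using hd
  have hp_degree (d : ℕ) (hd : d < n) : (p d hd).degree = d := by
    rw [degree_eq_natDegree (leadingCoeff_ne_zero.1 (hpunit d hd).ne_zero), hpdeg]
  -- pad `p` with powers of `X` to a full polynomial sequence
  let S : Sequence R :=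
    { elems' := fun d => if hd : d < n then p d hd else X ^ d
      degree_eq' := fun d => by
        split_ifs with hd
        · exact hp_degree d hd
        · exact degree_X_pow d }
  refine le_antisymm (span_le.2 fun q hq => mem_degreeLT.2 (hs q hq)) ?_
  rw [← S.span_degreeLT fun d hd => by simpa [S, hd] using hpunit d hd]
  refine span_mono ?_
  rintro _ ⟨d, hd, rfl⟩
  simpa [S, show d < n from hd] using hps d hd

section OneSubXPow

variable {R : Type*} [CommRing R]

open PowerSeries.WithPiTopology in
theorem prod_one_sub_X_pow_mul_mk_pCount {S : Finset ℕ} (hS : 0 ∉ S) :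
    (∏ j ∈ S, (1 - PowerSeries.X ^ j)) * PowerSeries.mk (fun k => (pCount k S : R)) = 1 := by
  let _ : TopologicalSpace R := ⊥
  have : DiscreteTopology R := ⟨rfl⟩
  simp_rw [pCount_eq_card_restricted]
  rw [Nat.Partition.powerSeriesMk_card_restricted_eq_tprod R (· ∈ S),
    tprod_eq_prod (s := S.preimage (· + 1) (add_left_injective 1).injOn) (by simp +contextual),
    ← prod_preimage (· + 1) S (add_left_injective 1).injOn _ ?_, ← prod_mul_distrib]
  · refine prod_eq_one fun i hi => ?_
    rw [if_pos (mem_preimage.1 hi)]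
    simp_rw [pow_mul]
    exact one_sub_mul_tsum_pow_of_constantCoeff_eq_zero (by simp)
  · rintro (_ | j) hj hj'
    · exact absurd hj hS
    · exact absurd ⟨j, rfl⟩ hj'

theorem prod_one_sub_X_pow_mul_mk_pCount_of_subset {S U : Finset ℕ} (hU : 0 ∉ U) (hSU : S ⊆ U) :
    (∏ j ∈ U, (1 - PowerSeries.X ^ j)) * PowerSeries.mk (fun k => (pCount k S : R)) =
      ((∏ j ∈ U \ S, (1 - X ^ j) : R[X]) : R⟦X⟧) := by
  rw [← prod_sdiff hSU, mul_assoc, prod_one_sub_X_pow_mul_mk_pCount fun h => hU (hSU h), mul_one,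
    ← coeToPowerSeries.ringHom_apply, map_prod]
  simp [coeToPowerSeries.ringHom_apply]

variable [IsDomain R]

theorem Polynomial.natDegree_prod_one_sub_X_pow {T : Finset ℕ} (hT : 0 ∉ T) :
    (∏ j ∈ T, (1 - X ^ j : R[X])).natDegree = ∑ j ∈ T, j := by
  rw [natDegree_prod _ _ fun j hj => ?_]
  · refine sum_congr rfl fun j _ => ?_
    rw [← neg_sub, natDegree_neg, ← C_1, natDegree_X_pow_sub_C]
  · rw [← neg_sub, neg_ne_zero, ← C_1]
    exact X_pow_sub_C_ne_zero (Nat.pos_of_ne_zero fun h => hT (h ▸ hj)) 1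

theorem Polynomial.leadingCoeff_prod_one_sub_X_pow {T : Finset ℕ} (hT : 0 ∉ T) :
    (∏ j ∈ T, (1 - X ^ j : R[X])).leadingCoeff = (-1) ^ #T := by
  rw [leadingCoeff_prod, ← prod_const]
  refine prod_congr rfl fun j hj => ?_
  rw [← neg_sub, leadingCoeff_neg, ← C_1,
    leadingCoeff_X_pow_sub_C (Nat.pos_of_ne_zero fun h => hT (h ▸ hj))]

theorem span_prod_one_sub_X_pow_sdiff (m : ℕ) :
    span R (Set.range fun S : {S : Finset ℕ // S.Nonempty ∧ S ⊆ Icc 1 m} =>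
        ∏ j ∈ Icc 1 m \ S.1, (1 - X ^ j : R[X])) =
      degreeLT R (∑ j ∈ Icc 1 m, j) := by
  have h0 {T : Finset ℕ} (hT : T ⊆ Icc 1 m) : 0 ∉ T := fun h => by simpa using hT h
  apply span_eq_degreeLT_of_forall_natDegree
  · rintro _ ⟨⟨S, ⟨s, hs⟩, hSm⟩, rfl⟩
    refine degree_le_natDegree.trans_lt ?_
    rw [natDegree_prod_one_sub_X_pow (h0 sdiff_subset), Nat.cast_lt]
    exact sum_lt_sum_of_subset sdiff_subset (hSm hs) (fun h => (mem_sdiff.1 h).2 hs)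
      (mem_Icc.1 (hSm hs)).1 fun _ _ _ => Nat.zero_le _
  · intro d hd
    obtain ⟨T, hT, rfl⟩ := exists_subset_Icc_sum_eq hd.le
    have hS : (Icc 1 m \ T).Nonempty := sdiff_nonempty.2 fun h => hd.ne (by rw [h.antisymm hT])
    refine ⟨_, ⟨⟨Icc 1 m \ T, hS, sdiff_subset⟩, rfl⟩, ?_⟩
    dsimp only
    rw [Finset.sdiff_sdiff_eq_self hT, natDegree_prod_one_sub_X_pow (h0 hT),
      leadingCoeff_prod_one_sub_X_pow (h0 hT)]
    exact ⟨rfl, isUnit_one.neg.pow _⟩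

end OneSubXPow

theorem pCount_matrix_rank_general (m : ℕ) :
    Module.finrank ℚ
        (Submodule.span ℚ (Set.range fun k : ℕ =>
          fun S : {S : Finset ℕ // S.Nonempty ∧ S ⊆ Finset.Icc 1 m} =>
            (pCount k S.1 : ℚ))) =
      m * (m + 1) / 2 := by
  have : Finite {S : Finset ℕ // S.Nonempty ∧ S ⊆ Icc 1 m} :=
    ((Icc 1 m).powerset.finite_toSet.subset fun S hS => mem_powerset.2 hS.2).to_subtype
  have h0 : 0 ∉ Icc 1 m := by simp
  set A := ∏ j ∈ Icc 1 m, (1 - PowerSeries.X ^ j : ℚ⟦X⟧)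
  set Θ := LinearMap.mulLeft ℚ A ∘ₗ PowerSeries.mkₗ ℚ
  have hΘ : Function.Injective Θ :=
    (IsUnit.of_mul_eq_one _ (prod_one_sub_X_pow_mul_mk_pCount h0)).mul_right_injective.comp
      (PowerSeries.mkₗ_injective ℚ)
  have hcoe : Function.Injective (coeToPowerSeries.algHom ℚ : ℚ[X] →ₐ[ℚ] ℚ⟦X⟧).toLinearMap :=
    coe_injective ℚ
  have hcol : Θ ∘ Function.swap (fun k (S : {S : Finset ℕ // S.Nonempty ∧ S ⊆ Icc 1 m}) =>
      (pCount k S.1 : ℚ)) =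
      (coeToPowerSeries.algHom ℚ).toLinearMap ∘ fun S => ∏ j ∈ Icc 1 m \ S.1, (1 - X ^ j : ℚ[X]) :=
    funext fun S => prod_one_sub_X_pow_mul_mk_pCount_of_subset h0 S.2.2
  rw [finrank_span_range_eq_finrank_span_range_swap, ← finrank_span_range_comp_of_injective hΘ,
    hcol, finrank_span_range_comp_of_injective hcoe, span_prod_one_sub_X_pow_sdiff,
    (degreeLTEquiv ℚ _).finrank_eq, finrank_fin_fun, ← sum_Icc_id_mul_two,
    Nat.mul_div_cancel _ two_pos]

/-- For a positive integer `m`, with `n = m(m+1)/2`, the infinite matrix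
whose rows are indexed by `k ∈ ℕ` and columns by non-empty subsets `S ⊆ {1,...,m}`, with
`(k,S)`-entry `p(k,S)`, has rank exactly `n` over `ℚ` (i.e. the span of its rows has
dimension `n`). -/
theorem pCount_matrix_rank (m : ℕ) (hm : 0 < m) :
    Module.finrank ℚ
        (Submodule.span ℚ (Set.range fun k : ℕ =>
          fun S : {S : Finset ℕ // S.Nonempty ∧ S ⊆ Finset.Icc 1 m} =>
            (pCount k S.1 : ℚ))) =
      m * (m + 1) / 2 :=
  pCount_matrix_rank_general m
end
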